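/- arXiv:0807.3461 — 6 statements merged into one kernel-verified Lean document; each statement's English description precedes it below -/
import Mathlib

section
/- Every additive basis has only finitely many essential subsets; that is, if A ⊆ ℤ is an additive basis, then the collection of essential subsets of A is finite. -/
/-!
Removing a finite set `P` from a basis `A` leaves a basis unless `A \ P` lies in a single residue
class modulo some `d ≥ 2`: with `b₀ = min (A \ P)`, the integers `w` such that `w + k b₀` is a sum
of `k` elements of `A \ P` form a monoid generating `ℤ`, so it contains two consecutive integers
and hence every large integer, and a bounded number of elements of `A \ P` can then replace the
removed summands. So an essential subset is the set of elements of `A` outside the residue class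
of `A \ P` modulo its `d`, and is determined by `d`.

It remains to bound the moduli `d` for which a tail `A ∩ [T, ∞)` lies in one residue class. If
they were unbounded, then for a basis of order `h` one could build thresholds `T₀ ≤ T₁ ≤ ⋯`,
moduli `d₀ ∣ d₁ ∣ ⋯` and residues `r_k` such that every representation of a number
`≡ r_k [ZMOD d_k]` has at least `k` summands below `T_k`: a representation with no summand in
`[T_k, T_{k+1})` is, modulo `d_{k+1}`, one of at most `(#(A ∩ (-∞, T_k)) + 1) ^ h` values, and
`d_{k+1}` is chosen so large that some lift of `r_k` avoids them all. For `k = h + 1` this is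
absurd.
-/

open scoped BigOperators

/-- `A` represents every sufficiently large integer as a sum of `h` of its elements
(repetitions allowed). -/
def RepresentsWith (A : Set ℤ) (h : ℕ) : Prop :=
  ∃ N : ℤ, ∀ n : ℤ, N ≤ n → ∃ f : Fin h → ℤ, (∀ i, f i ∈ A) ∧ (∑ i, f i) = n

/-- `A ⊆ ℤ` is an additive basis: it has finite intersection with the negative integers and
there is an `h` such that every sufficiently large integer is a sum of `h` elements of `A`. -/
def IsAdditiveBasis (A : Set ℤ) : Prop :=
  (A ∩ {x : ℤ | x < 0}).Finite ∧ ∃ h : ℕ, RepresentsWith A h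

/-- `P` is an essentiality of `A`: `P ⊆ A`, `A \ P` is not a basis, and `P` is minimal
for inclusion with this property. -/
def IsEssentiality (A P : Set ℤ) : Prop :=
  P ⊆ A ∧ ¬ IsAdditiveBasis (A \ P) ∧ ∀ Q : Set ℤ, Q ⊂ P → IsAdditiveBasis (A \ Q)

/-- `P` is an essential subset of `A`: a finite essentiality. -/
def IsEssentialSubset (A P : Set ℤ) : Prop :=
  IsEssentiality A P ∧ P.Finite

def InResidueClass (S : Set ℤ) (d : ℕ) : Prop :=
  ∀ x ∈ S, ∀ y ∈ S, (d : ℤ) ∣ x - y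

theorem InResidueClass.mono {S S' : Set ℤ} {d : ℕ} (h : InResidueClass S d) (hS : S' ⊆ S) :
    InResidueClass S' d :=
  fun x hx y hy => h x (hS hx) y (hS hy)

theorem InResidueClass.lcm {S S' : Set ℤ} {d d' : ℕ} (h : InResidueClass S d)
    (h' : InResidueClass S' d') : InResidueClass (S ∩ S') (d.lcm d') := fun x hx y hy =>
  Int.natCast_dvd.2 <| Nat.lcm_dvd (Int.natCast_dvd.1 (h x hx.1 y hy.1))
    (Int.natCast_dvd.1 (h' x hx.2 y hy.2))

def IsSumOf (S : Set ℤ) (k : ℕ) (n : ℤ) : Prop :=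
  ∃ f : Fin k → ℤ, (∀ i, f i ∈ S) ∧ ∑ i, f i = n

namespace IsSumOf

variable {S : Set ℤ} {k l : ℕ} {m n : ℤ}

theorem const {b : ℤ} (hb : b ∈ S) (k : ℕ) : IsSumOf S k (k * b) :=
  ⟨fun _ => b, fun _ => hb, by simp⟩

theorem add (hm : IsSumOf S k m) (hn : IsSumOf S l n) : IsSumOf S (k + l) (m + n) := by
  obtain ⟨f, hfS, rfl⟩ := hm
  obtain ⟨g, hgS, rfl⟩ := hn
  refine ⟨Fin.append f g, Fin.addCases (by simpa using hfS) (by simpa using hgS), ?_⟩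
  simp [Fin.sum_univ_add]

theorem le_mul {a : ℤ} (hn : IsSumOf S k n) (hS : ∀ x ∈ S, x ≤ a) : n ≤ k * a := by
  obtain ⟨f, hfS, rfl⟩ := hn
  simpa using Finset.sum_le_card_nsmul Finset.univ _ a fun i _ => hS _ (hfS i)

theorem mul_le {a : ℤ} (hn : IsSumOf S k n) (hS : ∀ x ∈ S, a ≤ x) : k * a ≤ n := by
  obtain ⟨f, hfS, rfl⟩ := hn
  simpa using Finset.card_nsmul_le_sum Finset.univ _ a fun i _ => hS _ (hfS i)

theorem dvd_sub_mul {d z : ℤ} (hn : IsSumOf S k n) (hS : ∀ x ∈ S, d ∣ x - z) :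
    d ∣ n - k * z := by
  obtain ⟨f, hfS, rfl⟩ := hn
  have : ∑ i, f i - k * z = ∑ i, (f i - z) := by simp [Finset.sum_sub_distrib]
  exact this ▸ Finset.dvd_sum fun i _ => hS _ (hfS i)

theorem exists_isSumOf_sub {B : Set ℤ} {b₀ W : ℤ} (hn : IsSumOf S k n) (hb₀ : b₀ ∈ B)
    (hW₀ : 0 ≤ W) (hW : ∀ x ∈ S, x ∉ B → |x - b₀| ≤ W) :
    ∃ w, |w| ≤ k * W ∧ IsSumOf B k (n - w) := by
  classical
  obtain ⟨f, hfS, rfl⟩ := hn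
  set g : Fin k → ℤ := fun i => if f i ∈ B then f i else b₀
  refine ⟨∑ i, (f i - g i), ?_, g, fun i => ?_, by simp [Finset.sum_sub_distrib]⟩
  · calc |∑ i, (f i - g i)| ≤ ∑ i, |f i - g i| := Finset.abs_sum_le_sum_abs _ _
      _ ≤ ∑ _i : Fin k, W := Finset.sum_le_sum fun i _ => by
          by_cases hi : f i ∈ B
          · simpa [g, hi] using hW₀
          · simpa [g, hi] using hW _ (hfS i) hi
      _ = k * W := by simp
  · by_cases hi : f i ∈ B <;> simp [g, hi, hb₀]

end IsSumOf

namespace IsAdditiveBasis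

variable {A : Set ℤ}

theorem not_bddAbove (hA : IsAdditiveBasis A) : ¬ BddAbove A := by
  rintro ⟨U, hU⟩
  obtain ⟨h, N, hN⟩ := hA.2
  have hn := IsSumOf.le_mul (hN (max N (h * U + 1)) (le_max_left _ _)) fun x hx => hU hx
  omega

theorem infinite (hA : IsAdditiveBasis A) : A.Infinite :=
  Set.infinite_of_not_bddAbove hA.not_bddAbove

theorem bddBelow (hA : IsAdditiveBasis A) : BddBelow A :=
  (hA.1.bddBelow.union bddBelow_Ici).mono fun x hx => (lt_or_ge x 0).imp (⟨hx, ·⟩) id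

theorem finite_inter_Iio (hA : IsAdditiveBasis A) (T : ℤ) : (A ∩ Set.Iio T).Finite := by
  obtain ⟨m, hm⟩ := hA.bddBelow
  exact (Set.finite_Ico m T).subset fun x hx => ⟨hm hx.1, hx.2⟩

end IsAdditiveBasis

theorem not_isAdditiveBasis_of_dvd_sub {S : Set ℤ} {d : ℕ} (hd : 2 ≤ d) {z : ℤ}
    (hS : ∀ x ∈ S, (d : ℤ) ∣ x - z) : ¬ IsAdditiveBasis S := by
  rintro ⟨-, h, N, hN⟩
  have h₀ := IsSumOf.dvd_sub_mul (hN N le_rfl) hS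
  have h₁ := IsSumOf.dvd_sub_mul (hN (N + 1) (by omega)) hS
  have := Int.le_of_dvd one_pos (by simpa using dvd_sub h₁ h₀)
  omega

theorem IsEssentiality.eq_setOf_not_dvd {A P : Set ℤ} (hP : IsEssentiality A P) {d : ℕ}
    (hd : 2 ≤ d) {z : ℤ} (hz : ∀ x ∈ A \ P, (d : ℤ) ∣ x - z) :
    P = {a ∈ A | ¬ (d : ℤ) ∣ a - z} := by
  ext a
  constructor
  · intro ha
    refine ⟨hP.1 ha, fun hdvd => ?_⟩
    refine not_isAdditiveBasis_of_dvd_sub hd (z := z) (fun x hx => ?_)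
      (hP.2.2 _ (Set.sdiff_singleton_ssubset.2 ha))
    by_cases hxa : x = a
    · exact hxa ▸ hdvd
    · exact hz x ⟨hx.1, fun hxP => hx.2 ⟨hxP, hxa⟩⟩
  · rintro ⟨haA, hnd⟩
    by_contra haP
    exact hnd (hz a ⟨haA, haP⟩)

def shiftedSums (B : Set ℤ) (b₀ : ℤ) : AddSubmonoid ℤ where
  carrier := {w | ∃ k, IsSumOf B k (w + k * b₀)}
  zero_mem' := ⟨0, fun _ => 0, fun i => i.elim0, by simp⟩
  add_mem' := by
    rintro v w ⟨k, hk⟩ ⟨l, hl⟩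
    refine ⟨k + l, ?_⟩
    convert hk.add hl using 1
    push_cast
    ring

section ShiftedSums

variable {B : Set ℤ} {b₀ : ℤ}

theorem sub_mem_shiftedSums {b : ℤ} (hb : b ∈ B) : b - b₀ ∈ shiftedSums B b₀ :=
  ⟨1, by simpa using IsSumOf.const hb 1⟩

theorem nonneg_of_mem_shiftedSums (hmin : ∀ b ∈ B, b₀ ≤ b) {w : ℤ}
    (hw : w ∈ shiftedSums B b₀) : 0 ≤ w := by
  obtain ⟨k, hk⟩ := hw
  linarith [hk.mul_le hmin]

theorem exists_isSumOf_of_subset_shiftedSums (hb₀ : b₀ ∈ B) (F : Finset ℤ)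
    (hF : ∀ w ∈ F, w ∈ shiftedSums B b₀) : ∃ L, ∀ w ∈ F, IsSumOf B L (w + L * b₀) := by
  choose! k hk using hF
  refine ⟨F.sup k, fun w hw => ?_⟩
  obtain ⟨j, hj⟩ := Nat.exists_eq_add_of_le (Finset.le_sup (f := k) hw)
  rw [hj]
  convert (hk w hw).add (IsSumOf.const hb₀ j) using 1
  push_cast
  ring

end ShiftedSums

theorem AddSubmonoid.exists_sub_of_mem_closure {G : Type*} [AddCommGroup G] (M : AddSubmonoid G)
    {x : G} (hx : x ∈ AddSubgroup.closure (M : Set G)) : ∃ a ∈ M, ∃ b ∈ M, x = a - b := by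
  induction hx using AddSubgroup.closure_induction with
  | mem x hx => exact ⟨x, hx, 0, M.zero_mem, (sub_zero x).symm⟩
  | zero => exact ⟨0, M.zero_mem, 0, M.zero_mem, (sub_zero 0).symm⟩
  | add x y _ _ hx hy =>
    obtain ⟨a, ha, b, hb, rfl⟩ := hx
    obtain ⟨c, hc, d, hd, rfl⟩ := hy
    exact ⟨a + c, M.add_mem ha hc, b + d, M.add_mem hb hd, by abel⟩
  | neg x _ hx =>
    obtain ⟨a, ha, b, hb, rfl⟩ := hx
    exact ⟨b, hb, a, ha, (neg_sub a b)⟩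

-- `w = s (c + 1) + (q - s) c` with `q = w / c ≥ c > s = w % c`.
theorem AddSubmonoid.int_mem_of_mul_self_le {M : AddSubmonoid ℤ} {c w : ℤ} (hc : 0 ≤ c)
    (hcM : c ∈ M) (hc1M : c + 1 ∈ M) (hw : c * c ≤ w) : w ∈ M := by
  rcases hc.eq_or_lt with rfl | hc
  · simpa [Int.toNat_of_nonneg (show 0 ≤ w by simpa using hw)] using M.nsmul_mem hc1M w.toNat
  have hs := Int.emod_nonneg w hc.ne'
  have hsc := Int.emod_lt_of_pos w hc
  have hq : c ≤ w / c := Int.le_ediv_of_mul_le hc hw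
  have hw' : w = (w % c).toNat • (c + 1) + (w / c - w % c).toNat • c := by
    have hqs : 0 ≤ w / c - w % c := by omega
    simp only [nsmul_eq_mul, Int.toNat_of_nonneg hs, Int.toNat_of_nonneg hqs]
    linarith [Int.emod_add_mul_ediv w c]
  rw [hw']
  exact M.add_mem (M.nsmul_mem hc1M _) (M.nsmul_mem hcM _)

theorem one_mem_of_forall_sub_mem {H : AddSubgroup ℤ} {B : Set ℤ} (hB : B.Nontrivial)
    (hmod : ∀ d : ℕ, 2 ≤ d → ¬ InResidueClass B d) (hH : ∀ x ∈ B, ∀ y ∈ B, x - y ∈ H) :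
    (1 : ℤ) ∈ H := by
  obtain ⟨g, rfl⟩ := Int.subgroup_cyclic H
  simp_rw [← AddSubgroup.zmultiples_eq_closure, Int.mem_zmultiples_iff] at hH ⊢
  have hg : InResidueClass B g.natAbs := fun x hx y hy => Int.natAbs_dvd.2 (hH x hx y hy)
  obtain ⟨x, hx, y, hy, hxy⟩ := hB
  have hg₀ : g.natAbs ≠ 0 := fun h₀ => hxy (by simpa [h₀, sub_eq_zero] using hg x hx y hy)
  have hg₁ : g.natAbs = 1 := by
    by_contra h₁
    exact hmod _ (by omega) hg
  exact Int.natAbs_dvd.1 (by simp [hg₁])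

theorem IsAdditiveBasis.diff_of_finite {A P : Set ℤ} (hA : IsAdditiveBasis A) (hP : P.Finite)
    (hmod : ∀ d : ℕ, 2 ≤ d → ¬ InResidueClass (A \ P) d) : IsAdditiveBasis (A \ P) := by
  set B := A \ P
  have hB : B.Infinite := hA.infinite.sdiff hP
  obtain ⟨b₀, hb₀, hmin⟩ := Int.exists_least_of_bdd (P := (· ∈ B))
    (by obtain ⟨m, hm⟩ := hA.bddBelow; exact ⟨m, fun z hz => hm hz.1⟩) hB.nonempty
  obtain ⟨c, hc, hc1⟩ : ∃ c ∈ shiftedSums B b₀, c + 1 ∈ shiftedSums B b₀ := by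
    have h1 := one_mem_of_forall_sub_mem (H := AddSubgroup.closure (shiftedSums B b₀ : Set ℤ))
      hB.nontrivial hmod fun x hx y hy => by
        simpa using sub_mem (AddSubgroup.subset_closure (sub_mem_shiftedSums (b₀ := b₀) hx))
          (AddSubgroup.subset_closure (sub_mem_shiftedSums (b₀ := b₀) hy))
    obtain ⟨a, ha, c, hc, hac⟩ := (shiftedSums B b₀).exists_sub_of_mem_closure h1
    exact ⟨c, hc, by rwa [show c + 1 = a by linarith]⟩
  set C := c * c
  obtain ⟨W, hW₀, hW⟩ : ∃ W, 0 ≤ W ∧ ∀ p ∈ P, |p - b₀| ≤ W := by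
    obtain ⟨K, hK⟩ := (hP.image (|· - b₀|)).bddAbove
    exact ⟨max K 0, le_max_right _ _, fun p hp => (hK ⟨p, hp, rfl⟩).trans (le_max_left _ _)⟩
  obtain ⟨h, N, hN⟩ := hA.2
  obtain ⟨L, hL⟩ := exists_isSumOf_of_subset_shiftedSums hb₀ (Finset.Icc C (C + 2 * h * W))
    fun w hw => AddSubmonoid.int_mem_of_mul_self_le (nonneg_of_mem_shiftedSums hmin hc) hc hc1
      (Finset.mem_Icc.1 hw).1
  refine ⟨hA.1.subset (Set.inter_subset_inter_left _ Set.sdiff_subset), h + L,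
    N + C + h * W + L * b₀, fun n hn => ?_⟩
  obtain ⟨w, hw, hsum⟩ := IsSumOf.exists_isSumOf_sub (hN (n - (C + h * W + L * b₀)) (by linarith))
    hb₀ hW₀ fun x hxA hx => hW x (by by_contra hxP; exact hx ⟨hxA, hxP⟩)
  have hwin : C + h * W + w ∈ Finset.Icc C (C + 2 * h * W) := by
    rw [Finset.mem_Icc]; constructor <;> linarith [abs_le.1 hw]
  show IsSumOf B (h + L) n
  convert hsum.add (hL _ hwin) using 1
  ring

open Finset in
def ForcesSmallSummands (A : Set ℤ) (h k : ℕ) (T r : ℤ) (d : ℕ) : Prop :=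
  ∀ f : Fin h → ℤ, (∀ i, f i ∈ A) → (d : ℤ) ∣ ∑ i, f i - r → k ≤ #{i | f i < T}

-- If no summand lies in `[T, T')`, then modulo `D` the sum is one of the few values `∑ g`.
theorem ForcesSmallSummands.succ {A : Set ℤ} {h k : ℕ} {T T' r r' e : ℤ} {d D : ℕ}
    (hF : ForcesSmallSummands A h k T r d) (hdD : d ∣ D) (hr : (d : ℤ) ∣ r' - r) (hTT' : T ≤ T')
    (S : Finset ℤ) (hS : ∀ x ∈ A, x < T → x ∈ S) (he : ∀ x ∈ A, T' ≤ x → (D : ℤ) ∣ x - e)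
    (hr' : ∀ g ∈ Fintype.piFinset fun _ : Fin h => insert e S, ¬ (D : ℤ) ∣ ∑ i, g i - r') :
    ForcesSmallSummands A h (k + 1) T' r' D := by
  classical
  intro f hfA hfr
  have hk := hF f hfA <| by
    simpa using dvd_add ((Int.natCast_dvd_natCast.2 hdD).trans hfr) hr
  by_contra! hlt
  have hgap : ∀ i, T ≤ f i → T' ≤ f i := by
    have hsub : ({i | f i < T} : Finset (Fin h)) ⊆ ({i | f i < T'} : Finset (Fin h)) := by
      intro i
      simp only [Finset.mem_filter, Finset.mem_univ, true_and]
      omega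
    have heq := Finset.eq_of_subset_of_card_le hsub (by omega)
    intro i hi
    by_contra! hi'
    have : i ∈ ({i | f i < T} : Finset (Fin h)) := heq ▸ by simpa using hi'
    simp only [Finset.mem_filter, Finset.mem_univ, true_and] at this
    omega
  set g : Fin h → ℤ := fun i => if f i < T then f i else e
  refine hr' g (Fintype.mem_piFinset.2 fun i => ?_) ?_
  · by_cases hi : f i < T <;> simp [g, hi, hS _ (hfA i)]
  · have hfg : (D : ℤ) ∣ ∑ i, f i - ∑ i, g i := by
      rw [← Finset.sum_sub_distrib]
      refine Finset.dvd_sum fun i _ => ?_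
      by_cases hi : f i < T
      · simp [g, hi]
      · simpa [g, hi] using he _ (hfA i) (hgap i (not_lt.1 hi))
    simpa using dvd_sub hfr hfg

theorem exists_not_dvd_sub_add_mul {K d : ℕ} (hd : 0 < d) (r : ℤ) (C : Finset ℤ)
    (hC : C.card < K) : ∃ t : ℕ, ∀ c ∈ C, ¬ ((d * K : ℕ) : ℤ) ∣ c - (r + t * d) := by
  by_contra! hcon
  choose c hcC hc using hcon
  obtain ⟨t₁, ht₁, t₂, ht₂, hne, heq⟩ := Finset.exists_ne_map_eq_of_card_lt_of_maps_to
    (s := Finset.range K) (by simpa using hC) (f := c) fun t _ => hcC t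
  have hdvd : ((d * K : ℕ) : ℤ) ∣ d * ((t₁ : ℤ) - t₂) := by
    have h := dvd_sub (hc t₂) (hc t₁)
    rwa [heq, show c t₂ - (r + t₂ * d) - (c t₂ - (r + t₁ * d)) = d * ((t₁ : ℤ) - t₂) by ring] at h
  push_cast at hdvd
  have := Int.eq_zero_of_abs_lt_dvd (Int.dvd_of_mul_dvd_mul_left (by positivity) hdvd)
    (by rw [Finset.mem_range] at ht₁ ht₂; rw [abs_lt]; omega)
  omega

theorem card_image_sum_piFinset_le {h : ℕ} (S : Finset ℤ) (e : ℤ) :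
    ((Fintype.piFinset fun _ : Fin h => insert e S).image fun g => ∑ i, g i).card ≤
      (S.card + 1) ^ h := by
  refine Finset.card_image_le.trans ?_
  simpa using Nat.pow_le_pow_left (Finset.card_insert_le e S) h

namespace IsAdditiveBasis

variable {A : Set ℤ}

theorem exists_forcesSmallSummands (hA : IsAdditiveBasis A)
    (hmod : ∀ b : ℕ, ∃ T d, InResidueClass (A ∩ Set.Ici T) d ∧ b < d) (h k : ℕ) :
    ∃ T r d, 0 < d ∧ InResidueClass (A ∩ Set.Ici T) d ∧ ForcesSmallSummands A h k T r d := by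
  induction k with
  | zero => exact ⟨0, 0, 1, one_pos, fun x _ y _ => by simp, fun _ _ _ => Nat.zero_le _⟩
  | succ k ih =>
    obtain ⟨T, r, d, hd, hT, hF⟩ := ih
    set S := (hA.finite_inter_Iio T).toFinset
    obtain ⟨T'', d'', hT'', hd''⟩ := hmod (d * ((S.card + 1) ^ h + 1))
    set T' := max T T''
    set D := d.lcm d''
    have hD : 0 < D := Nat.lcm_pos hd (by omega)
    have hT' : InResidueClass (A ∩ Set.Ici T') D := (hT.lcm hT'').mono fun x ⟨hxA, hxT⟩ => by
      rw [Set.mem_Ici, max_le_iff] at hxT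
      exact ⟨⟨hxA, hxT.1⟩, hxA, hxT.2⟩
    obtain ⟨e, heA, heT'⟩ := not_bddAbove_iff.1 hA.not_bddAbove T'
    obtain ⟨K, hK⟩ : d ∣ D := Nat.dvd_lcm_left d d''
    have hK_gt : (S.card + 1) ^ h < K := by
      have : d * ((S.card + 1) ^ h + 1) ≤ d * K :=
        hK ▸ hd''.le.trans (Nat.le_of_dvd hD (Nat.dvd_lcm_right d d''))
      exact Nat.le_of_mul_le_mul_left this hd
    obtain ⟨t, ht⟩ := exists_not_dvd_sub_add_mul hd r _
      ((card_image_sum_piFinset_le S e).trans_lt hK_gt)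
    refine ⟨T', r + t * d, D, hD, hT', hF.succ (Nat.dvd_lcm_left d d'') (by simp)
      (le_max_left _ _) S (fun x hx hxT => by simp [S, hx, hxT])
      (fun x hx hxT => hT' x ⟨hx, hxT⟩ e ⟨heA, heT'.le⟩) fun g hg => ?_⟩
    rw [hK]
    exact ht _ (Finset.mem_image_of_mem _ hg)

open Finset in
theorem exists_forall_inResidueClass_Ici_le (hA : IsAdditiveBasis A) :
    ∃ D : ℕ, ∀ T d, InResidueClass (A ∩ Set.Ici T) d → d ≤ D := by
  by_contra! hmod
  obtain ⟨h, N, hN⟩ := hA.2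
  obtain ⟨T, r, d, hd, -, hF⟩ := hA.exists_forcesSmallSummands hmod h (h + 1)
  have hd₁ : (1 : ℤ) ≤ d := by exact_mod_cast hd
  obtain ⟨f, hfA, hf⟩ := hN (r + d * |N - r|) <| by
    nlinarith [le_abs_self (N - r), abs_nonneg (N - r)]
  have hcard : #{i | f i < T} ≤ h := (Finset.card_le_univ _).trans_eq (Fintype.card_fin h)
  have := hF f hfA (by simp [hf])
  omega

end IsAdditiveBasis

theorem essential_subsets_finite (A : Set ℤ) (hA : IsAdditiveBasis A) :
    {P : Set ℤ | IsEssentialSubset A P}.Finite := by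
  obtain ⟨D, hD⟩ := hA.exists_forall_inResidueClass_Ici_le
  have hmod : ∀ P ∈ {P | IsEssentialSubset A P}, ∃ d, 2 ≤ d ∧ InResidueClass (A \ P) d := by
    rintro P ⟨hP, hPfin⟩
    by_contra! h
    exact hP.2.1 (hA.diff_of_finite hPfin h)
  choose! d hd₂ hdP using hmod
  refine Set.Finite.of_finite_image (f := d) ((Set.finite_Iic D).subset ?_)
    fun P hP P' hP' hPP' => ?_
  · rintro _ ⟨P, hP, rfl⟩
    obtain ⟨T, hT⟩ := hP.2.bddAbove
    exact hD (T + 1) _ <| (hdP P hP).mono fun x hx =>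
      ⟨hx.1, fun hxP => by linarith [hT hxP, Set.mem_Ici.1 hx.2]⟩
  · obtain ⟨z, hzA, hz⟩ := (hA.infinite.sdiff (hP.2.union hP'.2)).nonempty
    rw [hP.1.eq_setOf_not_dvd (hd₂ P hP) fun x hx => hdP P hP x hx z ⟨hzA, (hz <| .inl ·)⟩,
      hP'.1.eq_setOf_not_dvd (hd₂ P' hP') fun x hx => hdP P' hP' x hx z ⟨hzA, (hz <| .inr ·)⟩,
      hPP']
end

section
/- Let A be an additive basis and let P₁ and P₂ be two distinct essentialities of A such that P₁ ∪ P₂ ≠ A. Then d(P₁) ≥ 2 and d(P₂) ≥ 2. -/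
open scoped BigOperators

/-- The gcd of a set of integers, as a natural number (the nonnegative generator of the
ideal generated by the set). -/
noncomputable def setGcd (S : Set ℤ) : ℕ :=
  (Submodule.IsPrincipal.generator (Ideal.span S)).natAbs

/-- `d(P) := gcd {x - y : x, y ∈ A \ P}`. -/
noncomputable def dP (A P : Set ℤ) : ℕ :=
  setGcd {z : ℤ | ∃ x ∈ A \ P, ∃ y ∈ A \ P, z = x - y}

/-!
An essentiality `P` of a basis `A` is nonempty, and for `y ∈ P` the set `C = A \ (P \ {y})` is a
basis with `C \ {y} = A \ P`. Removing one point `y` from a basis leaves a basis as soon as the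
differences of the remaining points generate `ℤ`: writing `y - b = p - q` with `p`, `q` sums of
`u` elements of `C \ {y}`, every `c + q` with `c ∈ C` is a sum of `u + 1` elements of `C \ {y}`.
Hence `d(P) ≠ 1`. Also `d(P) ≠ 0`, since `A \ P` is cofinite in the infinite set `C`.
-/

open Pointwise

lemma representsWith_iff_exists_mem_nsmul {B : Set ℤ} {h : ℕ} :
    RepresentsWith B h ↔ ∃ N : ℤ, ∀ n : ℤ, N ≤ n → n ∈ h • B := by
  simp only [RepresentsWith, Set.mem_nsmul_iff_sum]

lemma RepresentsWith.infinite {B : Set ℤ} {h : ℕ} (hB : RepresentsWith B h) : B.Infinite := by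
  classical
  intro hfin
  obtain ⟨N, hN⟩ := representsWith_iff_exists_mem_nsmul.mp hB
  have hsumset : (h • B).Finite := by
    rw [← hfin.coe_toFinset, ← Finset.coe_nsmul]
    exact Finset.finite_toSet _
  exact Set.Ici_infinite N (hsumset.subset fun n hn => hN n hn)

lemma exists_mem_nsmul_sub_nsmul_of_mem_closure {G : Type*} [AddCommGroup G] {B : Set G} {z : G}
    (hz : z ∈ AddSubgroup.closure (B - B)) : ∃ u : ℕ, z ∈ u • B - u • B := by
  induction hz using AddSubgroup.closure_induction with
  | mem z hz => exact ⟨1, by rwa [one_nsmul]⟩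
  | zero => exact ⟨0, by simp⟩
  | add x y _ _ ihx ihy =>
    obtain ⟨u, hx⟩ := ihx
    obtain ⟨v, hy⟩ := ihy
    refine ⟨u + v, ?_⟩
    rw [add_nsmul, ← sub_add_sub_comm]
    exact Set.add_mem_add hx hy
  | neg x _ ihx =>
    obtain ⟨u, p, hp, q, hq, rfl⟩ := ihx
    exact ⟨u, q, hq, p, hp, (neg_sub p q).symm⟩

theorem RepresentsWith.exists_diff_singleton {C : Set ℤ} {y : ℤ} {h : ℕ} (hC : RepresentsWith C h)
    (hgen : AddSubgroup.closure (C \ {y} - C \ {y}) = ⊤) :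
    ∃ H : ℕ, RepresentsWith (C \ {y}) H := by
  obtain ⟨b, hb⟩ : (C \ {y}).Nonempty := by
    rw [Set.nonempty_iff_ne_empty]
    rintro hempty
    rw [hempty, Set.empty_sub, AddSubgroup.closure_empty] at hgen
    exact bot_ne_top hgen
  obtain ⟨u, p, hp, q, hq, hpq⟩ :=
    exists_mem_nsmul_sub_nsmul_of_mem_closure (hgen ▸ AddSubgroup.mem_top (y - b))
  have hshift : C + {q} ⊆ (u + 1) • (C \ {y}) := by
    rintro _ ⟨c, hc, _, rfl, rfl⟩
    rw [succ_nsmul']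
    by_cases hcy : c = y
    · exact ⟨b, hb, p, hp, by rw [hcy]; linear_combination hpq⟩
    · exact Set.add_mem_add ⟨hc, hcy⟩ hq
  obtain ⟨N, hN⟩ := representsWith_iff_exists_mem_nsmul.mp hC
  refine ⟨h * (u + 1), representsWith_iff_exists_mem_nsmul.mpr ⟨N + h • q, fun n hn => ?_⟩⟩
  have hn' : n - h • q + h • q ∈ h • C + h • {q} :=
    Set.add_mem_add (hN _ (by simp only [nsmul_eq_mul] at hn ⊢; omega))
      (by rw [Set.nsmul_singleton]; rfl)
  rw [sub_add_cancel, ← nsmul_add] at hn'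
  rw [mul_nsmul']
  exact Set.nsmul_subset_nsmul_left hshift hn'

lemma closure_eq_top_of_setGcd_eq_one {S : Set ℤ} (hS : setGcd S = 1) :
    AddSubgroup.closure S = ⊤ := by
  have hspan : Ideal.span S = ⊤ := by
    rw [← Submodule.IsPrincipal.span_singleton_generator (Ideal.span S)]
    exact Ideal.span_singleton_eq_top.mpr (Int.isUnit_iff_natAbs_eq.mpr hS)
  rw [← Submodule.span_int_eq_addSubgroupClosure]
  exact congrArg Submodule.toAddSubgroup hspan

lemma eq_zero_of_setGcd_eq_zero {S : Set ℤ} (hS : setGcd S = 0) : ∀ x ∈ S, x = 0 :=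
  Ideal.span_eq_bot.mp <|
    (Submodule.IsPrincipal.eq_bot_iff_generator_eq_zero _).mpr (Int.natAbs_eq_zero.mp hS)

lemma dP_eq_setGcd_sub (A P : Set ℤ) : dP A P = setGcd (A \ P - A \ P) := by
  simp only [dP]
  congr 1
  ext z
  simp only [Set.mem_sub, Set.mem_ofPred_eq, eq_comm]

theorem IsEssentiality.two_le_dP {A P : Set ℤ} (hA : IsAdditiveBasis A)
    (hP : IsEssentiality A P) : 2 ≤ dP A P := by
  obtain ⟨-, hnotBasis, hmin⟩ := hP
  obtain ⟨y, hy⟩ : P.Nonempty := by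
    rw [Set.nonempty_iff_ne_empty]
    rintro rfl
    exact hnotBasis (by rwa [Set.sdiff_empty])
  obtain ⟨-, h, hC⟩ := hmin (P \ {y}) (Set.sdiff_singleton_ssubset.mpr hy)
  have hCy : (A \ (P \ {y})) \ {y} = A \ P := by
    rw [Set.sdiff_sdiff, Set.sdiff_union_self,
      Set.union_eq_left.mpr (Set.singleton_subset_iff.mpr hy)]
  rw [dP_eq_setGcd_sub]
  have hne0 : setGcd (A \ P - A \ P) ≠ 0 := by
    intro h0
    obtain ⟨x, hx, x', hx', hxx'⟩ := (hCy ▸ hC.infinite.sdiff (Set.finite_singleton y)).nontrivial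
    exact hxx' (sub_eq_zero.mp (eq_zero_of_setGcd_eq_zero h0 _ (Set.sub_mem_sub hx hx')))
  have hne1 : setGcd (A \ P - A \ P) ≠ 1 := by
    intro h1
    obtain ⟨H, hH⟩ := hC.exists_diff_singleton (hCy ▸ closure_eq_top_of_setGcd_eq_one h1)
    exact hnotBasis ⟨hA.1.subset (Set.inter_subset_inter_left _ Set.sdiff_subset), H, hCy ▸ hH⟩
  omega

theorem dP_ge_two_general (A P₁ P₂ : Set ℤ) (hA : IsAdditiveBasis A)
    (h₁ : IsEssentiality A P₁) (h₂ : IsEssentiality A P₂) :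
    2 ≤ dP A P₁ ∧ 2 ≤ dP A P₂ :=
  ⟨h₁.two_le_dP hA, h₂.two_le_dP hA⟩

theorem dP_ge_two (A P₁ P₂ : Set ℤ) (hA : IsAdditiveBasis A)
    (h₁ : IsEssentiality A P₁) (h₂ : IsEssentiality A P₂) (hne : P₁ ≠ P₂)
    (hcover : P₁ ∪ P₂ ≠ A) :
    2 ≤ dP A P₁ ∧ 2 ≤ dP A P₂ :=
  dP_ge_two_general A P₁ P₂ hA h₁ h₂
end

section
/- Let A be an additive basis and let P₁ and P₂ be two distinct essentialities of A such that P₁ ∪ P₂ ≠ A. Then gcd(d(P₁), d(P₂)) = 1. -/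
/-!
Pick `a ∈ A` outside `P₁ ∪ P₂` and let `g = gcd(d(P₁), d(P₂))`. Since `P₁ ⊄ P₂` (minimality of
`P₂`), the set `P₁ ∩ P₂` is a proper subset of `P₁`, so `A \ (P₁ ∩ P₂)` is a basis by minimality
of `P₁`. Each of its elements avoids `P₁` or `P₂`, hence is `≡ a` modulo `g`. A sum of `h` such
elements is then `≡ h a`, and since both `N` and `N + 1` are such sums, `g = 1`.
-/

open scoped BigOperators

theorem setGcd_dvd_of_mem {S : Set ℤ} {z : ℤ} (hz : z ∈ S) : (setGcd S : ℤ) ∣ z := by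
  have := (Submodule.IsPrincipal.mem_iff_generator_dvd _).mp (Ideal.subset_span hz)
  simpa [setGcd, Int.natAbs_dvd] using this

theorem modEq_dP {A P : Set ℤ} {x y : ℤ} (hx : x ∈ A \ P) (hy : y ∈ A \ P) :
    x ≡ y [ZMOD dP A P] := by
  have hdvd : (dP A P : ℤ) ∣ x - y := setGcd_dvd_of_mem ⟨x, hx, y, hy, rfl⟩
  exact (Int.modEq_iff_dvd.mpr hdvd).symm

theorem RepresentsWith.eq_one_of_modEq {B : Set ℤ} {h m : ℕ} {a : ℤ} (hB : RepresentsWith B h)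
    (hm : ∀ x ∈ B, x ≡ a [ZMOD m]) : m = 1 := by
  obtain ⟨N, hrep⟩ := hB
  have hsum : ∀ n, N ≤ n → n ≡ h * a [ZMOD m] := fun n hn => by
    obtain ⟨f, hfB, rfl⟩ := hrep n hn
    simpa using Int.ModEq.sum (s := Finset.univ) fun i _ => hm (f i) (hfB i)
  have hN : N ≡ N + 1 [ZMOD m] := (hsum N le_rfl).trans (hsum (N + 1) (by omega)).symm
  have : (m : ℤ) ∣ 1 := by simpa using hN.dvd
  exact_mod_cast Int.eq_one_of_dvd_one (Int.natCast_nonneg m) this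

theorem IsEssentiality.not_ssubset {A P₁ P₂ : Set ℤ} (h₁ : IsEssentiality A P₁)
    (h₂ : IsEssentiality A P₂) : ¬ P₁ ⊂ P₂ :=
  fun hlt => h₁.2.1 (h₂.2.2 P₁ hlt)

theorem IsEssentiality.inter_ssubset_left {A P₁ P₂ : Set ℤ} (h₁ : IsEssentiality A P₁)
    (h₂ : IsEssentiality A P₂) (hne : P₁ ≠ P₂) : P₁ ∩ P₂ ⊂ P₁ := by
  refine Set.inter_subset_left.ssubset_of_ne fun heq => ?_
  have hle : P₁ ⊆ P₂ := Set.inter_eq_left.mp heq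
  exact h₁.not_ssubset h₂ (hle.ssubset_of_ne hne)

theorem modEq_of_mem_diff_inter {A P₁ P₂ : Set ℤ} {a x : ℤ} (ha : a ∈ A \ (P₁ ∪ P₂))
    (hx : x ∈ A \ (P₁ ∩ P₂)) : x ≡ a [ZMOD Nat.gcd (dP A P₁) (dP A P₂)] := by
  obtain ⟨haA, haP⟩ := ha
  obtain ⟨hxA, hxP⟩ := hx
  rw [Set.mem_union, not_or] at haP
  rw [Set.mem_inter_iff, not_and_or] at hxP
  rcases hxP with hx₁ | hx₂
  · exact (modEq_dP ⟨hxA, hx₁⟩ ⟨haA, haP.1⟩).of_dvd (by exact_mod_cast Nat.gcd_dvd_left _ _)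
  · exact (modEq_dP ⟨hxA, hx₂⟩ ⟨haA, haP.2⟩).of_dvd (by exact_mod_cast Nat.gcd_dvd_right _ _)

theorem dP_coprime_general (A P₁ P₂ : Set ℤ)
    (h₁ : IsEssentiality A P₁) (h₂ : IsEssentiality A P₂) (hne : P₁ ≠ P₂)
    (hcover : P₁ ∪ P₂ ≠ A) :
    Nat.gcd (dP A P₁) (dP A P₂) = 1 := by
  obtain ⟨a, ha⟩ : (A \ (P₁ ∪ P₂)).Nonempty :=
    Set.sdiff_nonempty.mpr fun hA => hcover (Set.union_subset h₁.1 h₂.1 |>.antisymm hA)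
  obtain ⟨-, h, hrep⟩ := h₁.2.2 _ (h₁.inter_ssubset_left h₂ hne)
  exact hrep.eq_one_of_modEq fun x hx => modEq_of_mem_diff_inter ha hx

theorem dP_coprime (A P₁ P₂ : Set ℤ) (hA : IsAdditiveBasis A)
    (h₁ : IsEssentiality A P₁) (h₂ : IsEssentiality A P₂) (hne : P₁ ≠ P₂)
    (hcover : P₁ ∪ P₂ ≠ A) :
    Nat.gcd (dP A P₁) (dP A P₂) = 1 :=
  dP_coprime_general A P₁ P₂ h₁ h₂ hne hcover
end

section
/- Let A be an additive basis and let (Pᵢ)_{i ∈ I} be a nonempty family of pairwise distinct essential subsets of A. Then for every pair (x, y) ∈ A² with x ≠ y, the cardinality of the set J_{x,y} := {i ∈ I : x ∉ Pᵢ and y ∉ Pᵢ} is at most ω(|x − y|), the number of distinct prime factors of |x − y|. -/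
open scoped BigOperators

/-!
If `A` is a basis and `F` is finite, then `A \ F` is again a basis unless it lies in a single
residue class modulo some prime: after shifting `A \ F` to have least element `0`, its elements
generate `ℤ` as a group, so the monoid they generate contains every large integer, and a bounded
number of summands then absorbs each element of the finite set `F`. Hence `A \ P` lies in one
residue class modulo a prime `p_P` for every essential subset `P`. Two distinct essential subsets
missing a common `x` cannot share this prime: removing from one of them a point outside the other
would leave a basis inside a single residue class. For `P` in `J_{x,y}` the prime `p_P` divides
`x - y`, so `P ↦ p_P` embeds `J_{x,y}` into the prime factors of `|x - y|`.
-/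

open scoped Pointwise

lemma not_representsWith_of_dvd_sub {C : Set ℤ} {p : ℕ} (hp : p ≠ 1) {r : ℤ}
    (hC : ∀ c ∈ C, (p : ℤ) ∣ c - r) (h : ℕ) : ¬ RepresentsWith C h := by
  rintro ⟨N, hN⟩
  have hsum : ∀ n, N ≤ n → (p : ℤ) ∣ n - h * r := by
    intro n hn
    obtain ⟨f, hf, rfl⟩ := hN n hn
    have hsub : ∑ i, f i - h * r = ∑ i, (f i - r) := by simp [Finset.sum_sub_distrib]
    rw [hsub]
    exact Finset.dvd_sum fun i _ => hC _ (hf i)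
  have hp1 : (p : ℤ) ∣ 1 := by
    simpa using dvd_sub (hsum (N + 1) (by omega)) (hsum N le_rfl)
  exact hp (Nat.dvd_one.mp (by exact_mod_cast hp1))

lemma IsEssentiality.subset_of_dvd_sub {A P P' : Set ℤ} (hP : IsEssentiality A P) {p : ℕ}
    (hp : p ≠ 1) {x : ℤ} (hPx : ∀ c ∈ A \ P, (p : ℤ) ∣ c - x)
    (hP'x : ∀ c ∈ A \ P', (p : ℤ) ∣ c - x) : P ⊆ P' := by
  intro a ha
  by_contra ha'
  obtain ⟨-, h, hrep⟩ := hP.2.2 (P \ {a}) (Set.sdiff_singleton_ssubset.mpr ha)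
  refine not_representsWith_of_dvd_sub hp (r := x) (fun c hc => ?_) h hrep
  obtain ⟨hcA, hc⟩ := hc
  by_cases hcP : c ∈ P
  · obtain rfl : c = a := by_contra fun hne => hc ⟨hcP, hne⟩
    exact hP'x c ⟨hcA, ha'⟩
  · exact hPx c ⟨hcA, hcP⟩

lemma RepresentsWith.of_forall_add_mem_nsmul {A B : Set ℤ} {h T : ℕ} {δ : ℤ}
    (hA : RepresentsWith A h) (hAB : ∀ a ∈ A, a + δ ∈ T • B) : RepresentsWith B (h * T) := by
  obtain ⟨N, hN⟩ := hA
  refine ⟨N + h * δ, fun n hn => ?_⟩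
  obtain ⟨f, hf, hsum⟩ := hN (n - h * δ) (by linarith)
  rw [← Set.mem_nsmul_iff_sum, mul_nsmul']
  refine Set.mem_nsmul_iff_sum.mpr ⟨fun i => f i + δ, fun i => hAB _ (hf i), ?_⟩
  simp [Finset.sum_add_distrib, hsum]

lemma AddSubgroup.closure_eq_top_of_forall_prime {S : Set ℤ}
    (hS : ∀ p : ℕ, p.Prime → ∃ s ∈ S, ¬ (p : ℤ) ∣ s) : AddSubgroup.closure S = ⊤ := by
  obtain ⟨d, hd⟩ := Int.subgroup_cyclic (AddSubgroup.closure S)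
  have hdS : ∀ s ∈ S, d ∣ s := fun s hs => by
    rw [← Int.mem_zmultiples_iff, AddSubgroup.zmultiples_eq_closure, ← hd]
    exact AddSubgroup.subset_closure hs
  have hunit : IsUnit d := by
    rw [Int.isUnit_iff_natAbs_eq, Nat.eq_one_iff_not_exists_prime_dvd]
    intro p hp hpd
    obtain ⟨s, hs, hps⟩ := hS p hp
    exact hps ((Int.natCast_dvd.mpr hpd).trans (hdS s hs))
  rw [hd, ← AddSubgroup.zmultiples_eq_closure, eq_top_iff]
  exact fun x _ => Int.mem_zmultiples_iff.mpr hunit.dvd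

lemma AddSubgroup.exists_sub_eq_of_mem_closure {G : Type*} [AddCommGroup G] {S : Set G} {x : G}
    (hx : x ∈ AddSubgroup.closure S) :
    ∃ a ∈ AddSubmonoid.closure S, ∃ b ∈ AddSubmonoid.closure S, a - b = x := by
  rw [← AddSubgroup.mem_toAddSubmonoid, AddSubgroup.closure_toAddSubmonoid,
    AddSubmonoid.closure_union, AddSubmonoid.mem_sup, AddSubmonoid.closure_neg] at hx
  obtain ⟨a, ha, b, hb, rfl⟩ := hx
  exact ⟨a, ha, -b, hb, sub_neg_eq_add a b⟩

lemma AddSubmonoid.mul_mem_of_nonneg (M : AddSubmonoid ℤ) {k x : ℤ} (hk : 0 ≤ k) (hx : x ∈ M) :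
    k * x ∈ M := by
  lift k to ℕ using hk
  simpa using nsmul_mem hx k

-- `v = (v / q - v % q) * q + (v % q) * (q + 1)`, both coefficients being nonnegative
-- once `q * q ≤ v`.
lemma AddSubmonoid.mem_of_sq_le {M : AddSubmonoid ℤ} {q : ℤ} (hq : 0 ≤ q) (hqM : q ∈ M)
    (hq1M : q + 1 ∈ M) {v : ℤ} (hv : q * q ≤ v) : v ∈ M := by
  rcases hq.eq_or_lt with rfl | hq
  · simpa using M.mul_mem_of_nonneg (by simpa using hv) hq1M
  have hqv : q ≤ v / q := (Int.le_ediv_iff_mul_le hq).mpr hv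
  have hrq : v % q < q := Int.emod_lt_of_pos v hq
  have hv_eq : v = (v / q - v % q) * q + v % q * (q + 1) := by
    linear_combination -(Int.mul_ediv_add_emod v q)
  rw [hv_eq]
  exact add_mem (M.mul_mem_of_nonneg (by omega) hqM)
    (M.mul_mem_of_nonneg (Int.emod_nonneg v hq.ne') hq1M)

lemma exists_forall_ge_mem_closure_of_nonneg {G : Set ℤ} (hG : ∀ g ∈ G, 0 ≤ g)
    (htop : AddSubgroup.closure G = ⊤) : ∃ c, ∀ v, c ≤ v → v ∈ AddSubmonoid.closure G := by
  obtain ⟨a, ha, q, hq, hsub⟩ :=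
    AddSubgroup.exists_sub_eq_of_mem_closure (htop ▸ AddSubgroup.mem_top (1 : ℤ))
  have hq0 : 0 ≤ q :=
    AddSubmonoid.closure_induction hG le_rfl (fun _ _ _ _ => add_nonneg) hq
  obtain rfl : a = q + 1 := by omega
  exact ⟨q * q, fun v => AddSubmonoid.mem_of_sq_le hq0 hq ha⟩

lemma AddSubmonoid.exists_mem_nsmul_of_mem_closure {M : Type*} [AddMonoid M] {G : Set M} {x : M}
    (hx : x ∈ AddSubmonoid.closure G) : ∃ t : ℕ, x ∈ t • G := by
  induction hx using AddSubmonoid.closure_induction with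
  | mem x hx => exact ⟨1, by simpa using hx⟩
  | zero => exact ⟨0, by simp⟩
  | add x y _ _ hx hy =>
    obtain ⟨s, hs⟩ := hx
    obtain ⟨t, ht⟩ := hy
    exact ⟨s + t, add_nsmul G s t ▸ Set.add_mem_add hs ht⟩

lemma Set.Finite.exists_subset_nsmul_of_subset_closure {M : Type*} [AddMonoid M] {G S : Set M}
    (hS : S.Finite) (hG : 0 ∈ G) (hSG : S ⊆ AddSubmonoid.closure G) : ∃ t : ℕ, S ⊆ t • G := by
  have hdir : Directed (· ⊆ ·) fun t : ℕ => t • G :=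
    (monotone_nat_of_le_succ fun t => Set.nsmul_subset_nsmul_right hG t.le_succ).directed_le
  simpa using hdir.exists_mem_subset_of_finset_subset_biUnion (s := hS.toFinset) fun x hx =>
    Set.mem_iUnion.mpr (AddSubmonoid.exists_mem_nsmul_of_mem_closure (hSG (by simpa using hx)))

lemma exists_forall_add_mem_nsmul {G F : Set ℤ} (hG0 : 0 ∈ G) (hG : ∀ g ∈ G, 0 ≤ g)
    (htop : AddSubgroup.closure G = ⊤) (hF : F.Finite) :
    ∃ (T : ℕ) (σ : ℤ), ∀ a ∈ G ∪ F, a + σ ∈ T • G := by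
  obtain ⟨c, hc⟩ := exists_forall_ge_mem_closure_of_nonneg hG htop
  obtain ⟨m, hm⟩ := hF.bddBelow
  set σ := c + max 0 (-m)
  obtain ⟨t, ht⟩ := ((hF.image (· + σ)).insert σ).exists_subset_nsmul_of_subset_closure hG0 <| by
    rintro _ (rfl | ⟨a, ha, rfl⟩)
    · exact hc σ (by omega)
    · exact hc (a + σ) (by have := hm ha; omega)
  refine ⟨t + 1, σ, ?_⟩
  rintro a (ha | ha)
  · rw [succ_nsmul']
    exact Set.add_mem_add ha (ht (Set.mem_insert σ _))
  · exact Set.nsmul_subset_nsmul_right hG0 t.le_succ (ht (Set.mem_insert_of_mem σ ⟨a, ha, rfl⟩))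

theorem IsAdditiveBasis.sdiff_of_forall_prime {A F : Set ℤ} (hA : IsAdditiveBasis A)
    (hF : F.Finite) (hgcd : ∀ p : ℕ, p.Prime → ∃ a ∈ A \ F, ∃ b ∈ A \ F, ¬ (p : ℤ) ∣ a - b) :
    IsAdditiveBasis (A \ F) := by
  obtain ⟨hneg, h, hrep⟩ := hA
  set B := A \ F
  have hBneg : (B ∩ {x | x < 0}).Finite :=
    hneg.subset (Set.inter_subset_inter_left _ Set.sdiff_subset)
  obtain ⟨b₀, hb₀B, hb₀⟩ : ∃ b₀, IsLeast B b₀ := by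
    obtain ⟨m, hm⟩ := hBneg.bddBelow
    obtain ⟨a, ha, -⟩ := hgcd 2 Nat.prime_two
    refine BddBelow.exists_isLeast_of_nonempty ⟨min m 0, fun b hb => ?_⟩ ⟨a, ha⟩
    by_cases hb0 : b < 0
    · exact (min_le_left _ _).trans (hm ⟨hb, hb0⟩)
    · exact (min_le_right _ _).trans (not_lt.mp hb0)
  set G := B + {-b₀}
  have hGB : G + {b₀} = B := by
    rw [add_assoc, Set.singleton_add_singleton, neg_add_cancel, Set.add_singleton]
    simp
  have hGtop : AddSubgroup.closure G = ⊤ := by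
    refine AddSubgroup.closure_eq_top_of_forall_prime fun p hp => ?_
    obtain ⟨a, ha, b, hb, hab⟩ := hgcd p hp
    by_contra! hG
    have hdiff := dvd_sub (hG _ (Set.add_mem_add ha rfl)) (hG _ (Set.add_mem_add hb rfl))
    exact hab (by simpa using hdiff)
  have hG0 : (0 : ℤ) ∈ G := add_neg_cancel b₀ ▸ Set.add_mem_add hb₀B (Set.mem_singleton (-b₀))
  have hG : ∀ g ∈ G, 0 ≤ g := by rintro _ ⟨b, hb, _, rfl, rfl⟩; linarith [hb₀ hb]
  obtain ⟨T, σ, hσ⟩ :=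
    exists_forall_add_mem_nsmul hG0 hG hGtop (hF.add (Set.finite_singleton (-b₀)))
  refine ⟨hBneg, h * T, hrep.of_forall_add_mem_nsmul (δ := σ - b₀ + T • b₀) fun a ha => ?_⟩
  rw [← hGB, nsmul_add, Set.nsmul_singleton,
    show a + (σ - b₀ + T • b₀) = a + -b₀ + σ + T • b₀ by ring]
  refine Set.add_mem_add (hσ _ ?_) (Set.mem_singleton _)
  by_cases haF : a ∈ F
  · exact Or.inr (Set.add_mem_add haF rfl)
  · exact Or.inl (Set.add_mem_add ⟨ha, haF⟩ rfl)

lemma IsEssentialSubset.exists_prime_dvd_sub {A P : Set ℤ} (hA : IsAdditiveBasis A)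
    (hP : IsEssentialSubset A P) :
    ∃ p : ℕ, p.Prime ∧ ∀ a ∈ A \ P, ∀ b ∈ A \ P, (p : ℤ) ∣ a - b := by
  by_contra! hgcd
  exact hP.1.2.1 (hA.sdiff_of_forall_prime hP.2 hgcd)

theorem Jxy_card_le_omega_general {I : Type*} (A : Set ℤ) (P : I → Set ℤ) (hA : IsAdditiveBasis A)
    (hP : ∀ i, IsEssentialSubset A (P i))
    (hdist : ∀ i j : I, i ≠ j → P i ≠ P j) :
    ∀ x ∈ A, ∀ y ∈ A, x ≠ y →
      {i : I | x ∉ P i ∧ y ∉ P i}.Finite ∧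
      {i : I | x ∉ P i ∧ y ∉ P i}.ncard ≤ (x - y).natAbs.primeFactors.card := by
  intro x hx y hy hxy
  choose p hp hdvd using fun i => (hP i).exists_prime_dvd_sub hA
  set J := {i : I | x ∉ P i ∧ y ∉ P i}
  have hmaps : Set.MapsTo p J (x - y).natAbs.primeFactors := fun i hi =>
    Nat.mem_primeFactors.mpr ⟨hp i, Int.natCast_dvd.mp (hdvd i x ⟨hx, hi.1⟩ y ⟨hy, hi.2⟩),
      by simpa [sub_eq_zero] using hxy⟩
  have hinj : Set.InjOn p J := by
    intro i hi j hj hij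
    have hres : ∀ k ∈ J, ∀ c ∈ A \ P k, (p k : ℤ) ∣ c - x := fun k hk c hc =>
      hdvd k c hc x ⟨hx, hk.1⟩
    have hi' := hres i hi
    have hj' : ∀ c ∈ A \ P j, (p i : ℤ) ∣ c - x := hij ▸ hres j hj
    by_contra hne
    exact hdist i j hne (((hP i).1.subset_of_dvd_sub (hp i).ne_one hi' hj').antisymm
      ((hP j).1.subset_of_dvd_sub (hp i).ne_one hj' hi'))
  refine ⟨(Finset.finite_toSet _).of_injOn hmaps hinj, ?_⟩
  simpa using Set.ncard_le_ncard_of_injOn p hmaps hinj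

theorem Jxy_card_le_omega {I : Type*} (A : Set ℤ) (P : I → Set ℤ) (hA : IsAdditiveBasis A)
    (hI : Nonempty I) (hP : ∀ i, IsEssentialSubset A (P i))
    (hdist : ∀ i j : I, i ≠ j → P i ≠ P j) :
    ∀ x ∈ A, ∀ y ∈ A, x ≠ y →
      {i : I | x ∉ P i ∧ y ∉ P i}.Finite ∧
      {i : I | x ∉ P i ∧ y ∉ P i}.ncard ≤ (x - y).natAbs.primeFactors.card :=
  Jxy_card_le_omega_general A P hA hP hdist
end

section
/- In the additive basis ℕ, the set {2k : k ∈ ℕ} of even natural numbers is an (infinite) essentiality of ℕ: the set of odd natural numbers is not an additive basis, but for every proper subset Q ⊊ {2k : k ∈ ℕ}, the set ℕ \ Q is an additive basis. -/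
open scoped BigOperators

/-! Sums of `h` elements of a set lying in one residue class `r` modulo `m > 1` all lie in the
class `h r`, so such a set is never a basis; the odd numbers are an instance. Conversely, once
some even number `e` is kept, every large `n` is `1 + (n - 1)` or `e + (n - e)` with the second
summand odd, so `ℕ` minus any proper subset of the evens is a basis of order `2`. -/

theorem not_representsWith_of_modEq {A : Set ℤ} {m r : ℤ} (hm : 1 < m)
    (hA : ∀ x ∈ A, x ≡ r [ZMOD m]) (h : ℕ) : ¬ RepresentsWith A h := by
  rintro ⟨N, hN⟩
  set t := |N| + |h * r|
  have ht : t ≤ m * t := le_mul_of_one_le_left (by positivity) hm.le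
  obtain ⟨f, hf, hsum⟩ := hN (h * r + 1 + m * t) (by
    linarith [le_abs_self N, neg_abs_le (h * r), abs_nonneg (h * r)])
  have hcong : h * r + 1 + m * t ≡ h * r [ZMOD m] := by
    simpa [← hsum] using Int.ModEq.sum fun i (_ : i ∈ Finset.univ) => hA _ (hf i)
  have hdvd : m ∣ 1 := by
    have := hcong.dvd
    rwa [show h * r - (h * r + 1 + m * t) = -(1 + m * t) by ring, dvd_neg,
      dvd_add_left (dvd_mul_right m t)] at this
  have := Int.le_of_dvd one_pos hdvd
  omega

theorem not_isAdditiveBasis_of_modEq {A : Set ℤ} {m r : ℤ} (hm : 1 < m)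
    (hA : ∀ x ∈ A, x ≡ r [ZMOD m]) : ¬ IsAdditiveBasis A :=
  fun ⟨_, h, hh⟩ => not_representsWith_of_modEq hm hA h hh

theorem representsWith_two {A : Set ℤ} (N : ℤ)
    (hA : ∀ n, N ≤ n → ∃ a ∈ A, ∃ b ∈ A, a + b = n) : RepresentsWith A 2 := by
  refine ⟨N, fun n hn => ?_⟩
  obtain ⟨a, ha, b, hb, rfl⟩ := hA n hn
  exact ⟨![a, b], fun i => by fin_cases i <;> assumption, by simp⟩

theorem isAdditiveBasis_of_subset_nonneg {A : Set ℤ} (hA : A ⊆ {x | 0 ≤ x}) {h : ℕ}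
    (hh : RepresentsWith A h) : IsAdditiveBasis A :=
  ⟨Set.finite_empty.subset fun x ⟨hxA, hx⟩ => (show (0 : ℤ) ≤ x from hA hxA).not_gt hx, h, hh⟩

theorem representsWith_two_of_odd_subset {A : Set ℤ} (hodd : ∀ x, 0 ≤ x → Odd x → x ∈ A)
    {e : ℤ} (he : Even e) (heA : e ∈ A) : RepresentsWith A 2 := by
  refine representsWith_two (max 1 e) fun n hn => ?_
  rcases Int.even_or_odd n with hn2 | hn2
  · refine ⟨1, hodd 1 zero_le_one odd_one, n - 1, hodd _ ?_ ?_, by ring⟩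
    · have := le_max_left 1 e; omega
    · exact hn2.sub_odd odd_one
  · refine ⟨e, heA, n - e, hodd _ ?_ ?_, by ring⟩
    · have := le_max_right 1 e; omega
    · exact hn2.sub_even he

theorem isAdditiveBasis_nonneg_sdiff {Q : Set ℤ} {e : ℤ} (hQ : ∀ x ∈ Q, Even x)
    (he : Even e) (he0 : 0 ≤ e) (heQ : e ∉ Q) : IsAdditiveBasis ({x | 0 ≤ x} \ Q) :=
  isAdditiveBasis_of_subset_nonneg Set.sdiff_subset <|
    representsWith_two_of_odd_subset
      (fun x hx hodd => ⟨hx, fun hxQ => Int.not_even_iff_odd.2 hodd (hQ x hxQ)⟩) he ⟨he0, heQ⟩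

theorem isAdditiveBasis_nonneg_sdiff_of_ssubset_evens {Q : Set ℤ}
    (hQ : Q ⊂ {x : ℤ | ∃ k : ℕ, x = 2 * k}) : IsAdditiveBasis ({x | 0 ≤ x} \ Q) := by
  obtain ⟨_, ⟨k, rfl⟩, hkQ⟩ := Set.exists_of_ssubset hQ
  refine isAdditiveBasis_nonneg_sdiff (fun x hx => ?_) (by simp) (by positivity) hkQ
  obtain ⟨j, rfl⟩ := hQ.subset hx
  simp

theorem nonneg_sdiff_evens :
    {x : ℤ | 0 ≤ x} \ {x : ℤ | ∃ k : ℕ, x = 2 * k} = {x : ℤ | ∃ k : ℕ, x = 2 * k + 1} := by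
  ext x
  simp only [Set.mem_sdiff, Set.mem_ofPred_eq]
  constructor
  · rintro ⟨hx, hne⟩
    exact ⟨(x / 2).toNat, by contrapose! hne; exact ⟨(x / 2).toNat, by omega⟩⟩
  · rintro ⟨k, rfl⟩
    exact ⟨by positivity, fun ⟨j, hj⟩ => by omega⟩

theorem evens_essentiality_of_nat :
    IsEssentiality {x : ℤ | 0 ≤ x} {x : ℤ | ∃ k : ℕ, x = 2 * k} ∧
    ¬ IsAdditiveBasis {x : ℤ | ∃ k : ℕ, x = 2 * k + 1} ∧
    ∀ Q : Set ℤ, Q ⊂ {x : ℤ | ∃ k : ℕ, x = 2 * k} →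
      IsAdditiveBasis ({x : ℤ | 0 ≤ x} \ Q) := by
  have hodds : ¬ IsAdditiveBasis {x : ℤ | ∃ k : ℕ, x = 2 * k + 1} :=
    not_isAdditiveBasis_of_modEq (r := 1) one_lt_two fun x ⟨k, hk⟩ => by
      rw [hk, Int.ModEq]; omega
  have hevens_nonneg : {x : ℤ | ∃ k : ℕ, x = 2 * k} ⊆ {x | 0 ≤ x} :=
    fun x ⟨k, hk⟩ => show (0 : ℤ) ≤ x by omega
  exact ⟨⟨hevens_nonneg, nonneg_sdiff_evens ▸ hodds,
    fun _ => isAdditiveBasis_nonneg_sdiff_of_ssubset_evens⟩, hodds,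
    fun _ => isAdditiveBasis_nonneg_sdiff_of_ssubset_evens⟩
end

section
/- In the additive basis ℕ, the set {2k + 1 : k ∈ ℕ} of odd natural numbers is an (infinite) essentiality of ℕ: the set of even natural numbers is not an additive basis, but for every proper subset Q ⊊ {2k + 1 : k ∈ ℕ}, the set ℕ \ Q is an additive basis. -/
/-!
A sum of even integers is even, so no set of even integers is a basis; in particular the even
naturals, which are what is left of `ℕ` once the odd numbers are removed, are not a basis. If
instead a single odd number `m` survives the removal of `Q`, then all even naturals survive as
well, and every `n ≥ m` is either `n + 0` or `m + (n - m)`, a sum of two surviving elements.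
-/

open scoped BigOperators

lemma exists_fin_two_sum_eq_add {A : Set ℤ} {a b : ℤ} (ha : a ∈ A) (hb : b ∈ A) :
    ∃ f : Fin 2 → ℤ, (∀ i, f i ∈ A) ∧ ∑ i, f i = a + b :=
  ⟨![a, b], fun i => by fin_cases i <;> assumption, by simp [Fin.sum_univ_two]⟩

theorem not_isAdditiveBasis_of_forall_even {A : Set ℤ} (hA : ∀ a ∈ A, Even a) :
    ¬ IsAdditiveBasis A := by
  rintro ⟨-, h, N, hN⟩
  obtain ⟨f, hfA, hsum⟩ := hN (2 * max N 0 + 1) (by omega)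
  have hsum_even : Even (∑ i, f i) := Finset.even_sum f fun i _ => hA _ (hfA i)
  exact Int.not_even_two_mul_add_one _ (hsum ▸ hsum_even)

theorem representsWith_two_of_odd_mem {A : Set ℤ} (hA : ∀ x, 0 ≤ x → Even x → x ∈ A)
    {m : ℤ} (hm : m ∈ A) (hm_odd : Odd m) : RepresentsWith A 2 := by
  refine ⟨max m 0, fun n hn => ?_⟩
  rcases Int.even_or_odd n with hn_even | hn_odd
  · simpa using exists_fin_two_sum_eq_add (hA n (by omega) hn_even) (hA 0 le_rfl Even.zero)
  · simpa using exists_fin_two_sum_eq_add hm (hA (n - m) (by omega) (hn_odd.sub_odd hm_odd))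

theorem isAdditiveBasis_of_nonneg {A : Set ℤ} (hA : ∀ a ∈ A, 0 ≤ a) {h : ℕ}
    (hrep : RepresentsWith A h) : IsAdditiveBasis A :=
  ⟨Set.finite_empty.subset fun x hx => absurd (hA x hx.1) (not_le.2 hx.2), h, hrep⟩

lemma mem_odds_iff {x : ℤ} : x ∈ {x : ℤ | ∃ k : ℕ, x = 2 * k + 1} ↔ 0 ≤ x ∧ Odd x :=
  ⟨fun ⟨k, hk⟩ => ⟨by omega, k, hk⟩, fun ⟨hx, k, hk⟩ => ⟨k.toNat, by omega⟩⟩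

theorem isAdditiveBasis_nonneg_diff_of_ssubset_odds {Q : Set ℤ}
    (hQ : Q ⊂ {x : ℤ | ∃ k : ℕ, x = 2 * k + 1}) : IsAdditiveBasis ({x : ℤ | 0 ≤ x} \ Q) := by
  obtain ⟨m, hm, hmQ⟩ := Set.exists_of_ssubset hQ
  have hm_nonneg_odd := mem_odds_iff.1 hm
  have hevens : ∀ x, 0 ≤ x → Even x → x ∈ {x : ℤ | 0 ≤ x} \ Q := fun x hx hx_even =>
    ⟨hx, fun hxQ => Int.not_odd_iff_even.2 hx_even (mem_odds_iff.1 (hQ.1 hxQ)).2⟩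
  exact isAdditiveBasis_of_nonneg (fun _ ha => ha.1)
    (representsWith_two_of_odd_mem hevens ⟨hm_nonneg_odd.1, hmQ⟩ hm_nonneg_odd.2)

theorem odds_essentiality_of_nat :
    IsEssentiality {x : ℤ | 0 ≤ x} {x : ℤ | ∃ k : ℕ, x = 2 * k + 1} ∧
    ¬ IsAdditiveBasis {x : ℤ | ∃ k : ℕ, x = 2 * k} ∧
    ∀ Q : Set ℤ, Q ⊂ {x : ℤ | ∃ k : ℕ, x = 2 * k + 1} →
      IsAdditiveBasis ({x : ℤ | 0 ≤ x} \ Q) := by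
  have hodds_nonneg : {x : ℤ | ∃ k : ℕ, x = 2 * k + 1} ⊆ {x : ℤ | 0 ≤ x} :=
    fun _ hx => (mem_odds_iff.1 hx).1
  have hrest_even : ∀ x ∈ {x : ℤ | 0 ≤ x} \ {x : ℤ | ∃ k : ℕ, x = 2 * k + 1}, Even x :=
    fun x ⟨hx, hx_odd⟩ => Int.not_odd_iff_even.1 fun h => hx_odd (mem_odds_iff.2 ⟨hx, h⟩)
  have hevens_even : ∀ x ∈ {x : ℤ | ∃ k : ℕ, x = 2 * k}, Even x :=
    fun _ ⟨k, hk⟩ => ⟨k, by omega⟩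
  exact ⟨⟨hodds_nonneg, not_isAdditiveBasis_of_forall_even hrest_even,
      fun _ => isAdditiveBasis_nonneg_diff_of_ssubset_odds⟩,
    not_isAdditiveBasis_of_forall_even hevens_even,
    fun _ => isAdditiveBasis_nonneg_diff_of_ssubset_odds⟩
end
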